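/- arXiv:2505.13779 — 3 statements merged into one kernel-verified Lean document; each statement's English description precedes it below -/
import Mathlib

section
/- For every v ∈ V there exist an integer m with 0 ≤ m ≤ n, a partition λ of n − m, and an element g ∈ G such that g·Stab_G(v)·g⁻¹ = H(m,λ); conversely, every subgroup H(m,λ) with m + |λ| = n is the stabilizer in G of some point of V. -/
open Matrix

namespace WreathCM

/-- The permutation action of `Perm (Fin n)` on `Fin n → Γ` by permuting coordinates,
as a homomorphism to the automorphism group. -/
def wreathφ (n : ℕ) (Γ : Type*) [Group Γ] :
    Equiv.Perm (Fin n) →* MulAut (Fin n → Γ) where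
  toFun σ := MulEquiv.arrowCongr σ (MulEquiv.refl Γ)
  map_one' := by ext γ i; rfl
  map_mul' σ τ := by ext γ i; rfl

/-- The wreath product `G = (Fin n → Γ) ⋊ Perm (Fin n) = Γ ≀ S_n`. -/
abbrev G (n : ℕ) (Γ : Type*) [Group Γ] :=
  SemidirectProduct (Fin n → Γ) (Equiv.Perm (Fin n)) (wreathφ n Γ)

/-- The action of `G` on `V = Fin n → ℂ²`: `((γ,σ)·v)(i) = γ(i)·v(σ⁻¹(i))`,
where `Γ ≤ SL(2,ℂ)` acts on `ℂ²` by matrix multiplication. -/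
noncomputable def act (n : ℕ) (Γ : Subgroup (SpecialLinearGroup (Fin 2) ℂ))
    (g : G n Γ) (v : Fin n → Fin 2 → ℂ) : Fin n → Fin 2 → ℂ :=
  fun i => ((g.left i : SpecialLinearGroup (Fin 2) ℂ) : Matrix (Fin 2) (Fin 2) ℂ).mulVec
    (v (g.right⁻¹ i))

/-- The stabilizer (as a set) of `v ∈ V` in `G`. -/
noncomputable def stabSet (n : ℕ) (Γ : Subgroup (SpecialLinearGroup (Fin 2) ℂ))
    (v : Fin n → Fin 2 → ℂ) : Set (G n Γ) :=
  {g | act n Γ g v = v}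

/-- The blocks `B_0, B_1, …, B_k` of `{0,…,n−1}`: `B_0 = {0,…,m−1}`, and `B_1,…,B_k` are
the subsequent consecutive blocks of sizes `λ_1,…,λ_k`. -/
def block (n m : ℕ) (lam : List ℕ) (t : ℕ) : Set (Fin n) :=
  if t = 0 then {i | (i : ℕ) < m}
  else {i | m + (lam.take (t - 1)).sum ≤ (i : ℕ) ∧ (i : ℕ) < m + (lam.take t).sum}

lemma mem_block_zero (n m : ℕ) (lam : List ℕ) (x : Fin n) :
    x ∈ block n m lam 0 ↔ (x : ℕ) < m := by
  simp [block]

/-- The subgroup `H(m,λ) ≤ G` of all `(γ,σ)` such that `σ(B_t) = B_t` for every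
`0 ≤ t ≤ k` and `γ(i) = 1` for all `i ≥ m`. -/
noncomputable def H (n : ℕ) (Γ : Subgroup (SpecialLinearGroup (Fin 2) ℂ))
    (m : ℕ) (lam : List ℕ) : Subgroup (G n Γ) where
  carrier := {g | (∀ t ≤ lam.length, ⇑g.right '' block n m lam t = block n m lam t) ∧
    ∀ i : Fin n, m ≤ (i : ℕ) → g.left i = 1}
  one_mem' := by
    refine ⟨fun t _ => ?_, fun i _ => rfl⟩
    simp
  mul_mem' := by
    rintro a b ⟨ha1, ha2⟩ ⟨hb1, hb2⟩
    refine ⟨fun t ht => ?_, fun i hi => ?_⟩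
    · rw [SemidirectProduct.mul_right, Equiv.Perm.coe_mul, Set.image_comp,
        hb1 t ht, ha1 t ht]
    · rw [SemidirectProduct.mul_left]
      have h2 : b.left (a.right⁻¹ i) = 1 := by
        apply hb2
        by_contra hlt
        push_neg at hlt
        have hmem : (a.right⁻¹ i : Fin n) ∈ block n m lam 0 :=
          (mem_block_zero n m lam _).mpr hlt
        have him : i ∈ block n m lam 0 := by
          rw [← ha1 0 (Nat.zero_le _)]
          exact ⟨a.right⁻¹ i, hmem, by simp⟩
        have := (mem_block_zero n m lam i).mp him
        omega
      have hval : (a.left * (wreathφ n Γ) a.right b.left) i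
          = a.left i * b.left (a.right⁻¹ i) := rfl
      rw [hval, ha2 i hi, h2, one_mul]
  inv_mem' := by
    rintro a ⟨ha1, ha2⟩
    refine ⟨fun t ht => ?_, fun i hi => ?_⟩
    · rw [SemidirectProduct.inv_right]
      have h := ha1 t ht
      calc ⇑a.right⁻¹ '' block n m lam t
          = ⇑a.right⁻¹ '' (⇑a.right '' block n m lam t) := by rw [h]
        _ = block n m lam t := by
            ext x
            simp [Set.mem_image]
    · have hle : m ≤ ((a.right i : Fin n) : ℕ) := by
        by_contra hlt
        push_neg at hlt
        have hmem : (a.right i : Fin n) ∈ block n m lam 0 :=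
          (mem_block_zero n m lam _).mpr hlt
        rw [← ha1 0 (Nat.zero_le _)] at hmem
        obtain ⟨x, hx, hxe⟩ := hmem
        have hxi : x = i := a.right.injective hxe
        subst hxi
        have := (mem_block_zero n m lam x).mp hx
        omega
      have hval : (a⁻¹).left i = (a.left (a.right i))⁻¹ := rfl
      rw [hval, ha2 _ hle, inv_one]

end WreathCM

/-!
An element of SL(2,ℂ) fixing a nonzero vector has trace 2, hence is unipotent, and a unipotent
element of finite order is the identity: nonzero vectors of ℂ² have trivial stabilizer in `Γ`.
Consequently, if `v` vanishes exactly on `B_0` and its coordinates on `B_t` (`t ≥ 1`) all equal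
one representative of a `Γ`-orbit, distinct blocks giving distinct orbits, then `g = (γ,σ)` fixes
`v` iff `σ` preserves every block and `γ` is trivial off `B_0`, i.e. `Stab_G(v) = H(m,λ)`.

Every `v` can be moved into this form by `G`: permute the coordinates so that the zero ones come
first and the others are grouped by `Γ`-orbit, the orbits ordered by decreasing multiplicity, then
act by `Γ` coordinatewise. Since `g·Stab_G(v)·g⁻¹ = Stab_G(g·v)`, this gives the first half.
Conversely, `Γ`-orbits in ℂ² are finite, so there are infinitely many of them and any number of
blocks can be filled with distinct orbits.
-/

open Finset

theorem one_add_pow_of_mul_self_eq_zero {R : Type*} [Semiring R] {N : R} (h : N * N = 0)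
    (k : ℕ) : (1 + N) ^ k = 1 + k • N := by
  induction k with
  | zero => simp
  | succ k ih =>
    rw [pow_succ, ih]
    simp only [mul_add, add_mul, mul_one, one_mul, smul_mul_assoc, h, smul_zero, add_zero,
      succ_nsmul]
    abel

theorem Matrix.SpecialLinearGroup.eq_one_of_isOfFinOrder_of_smul_eq_self {K : Type*} [Field K]
    [CharZero K] {A : SpecialLinearGroup (Fin 2) K} (hA : IsOfFinOrder A) {w : Fin 2 → K}
    (hw : w ≠ 0) (hfix : A • w = w) : A = 1 := by
  set N : Matrix (Fin 2) (Fin 2) K := A - 1 with hN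
  have hdetN : N.det = 0 := exists_mulVec_eq_zero_iff.mp
    ⟨w, hw, by rw [hN, sub_mulVec, one_mulVec]; exact sub_eq_zero.mpr hfix⟩
  have hdetA : (A : Matrix (Fin 2) (Fin 2) K).det = 1 := A.2
  rw [det_fin_two] at hdetN hdetA
  simp only [hN, sub_apply, one_apply_eq, one_apply_ne one_ne_zero,
    one_apply_ne zero_ne_one] at hdetN
  have htrace : A 0 0 + A 1 1 = 2 := by linear_combination hdetA - hdetN
  have hsq : N * N = 0 := by
    ext i j
    fin_cases i <;> fin_cases j <;> simp [hN, mul_apply, Fin.sum_univ_two, one_apply]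
    · linear_combination A 0 0 * htrace - hdetA
    · linear_combination A 0 1 * htrace
    · linear_combination A 1 0 * htrace
    · linear_combination A 1 1 * htrace - hdetA
  have hpow : (1 + N) ^ orderOf A = 1 := by
    rw [hN, add_sub_cancel, ← SpecialLinearGroup.coe_pow, pow_orderOf_eq_one]
    rfl
  rw [one_add_pow_of_mul_self_eq_zero hsq, add_eq_left, ← Nat.cast_smul_eq_nsmul K,
    smul_eq_zero, Nat.cast_eq_zero] at hpow
  exact Subtype.ext (sub_eq_zero.mp (hpow.resolve_left hA.orderOf_pos.ne'))

/-- The index of the part of `l` containing `j` when the parts are laid out consecutively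
from `0`. -/
def partIndex : List ℕ → ℕ → ℕ
  | [], _ => 0
  | a :: l, j => if j < a then 0 else partIndex l (j - a) + 1

theorem partIndex_eq_iff {l : List ℕ} {j : ℕ} (hj : j < l.sum) (t : ℕ) :
    partIndex l j = t ↔ (l.take t).sum ≤ j ∧ j < (l.take (t + 1)).sum := by
  induction l generalizing j t with
  | nil => simp at hj
  | cons a l ih =>
    rw [List.sum_cons] at hj
    by_cases hja : j < a
    · cases t with
      | zero => simp [partIndex, hja]
      | succ t => simp [partIndex, hja]; omega
    · cases t with
      | zero => simp [partIndex, hja]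
      | succ t =>
        simp only [partIndex, hja, if_false, add_left_inj, List.take_succ_cons, List.sum_cons,
          ih (show j - a < l.sum by omega)]
        omega

theorem partIndex_lt_length {l : List ℕ} {j : ℕ} (hj : j < l.sum) :
    partIndex l j < l.length := by
  by_contra! h
  have := ((partIndex_eq_iff hj _).mp rfl).1
  rw [List.take_of_length_le h] at this
  omega

theorem Fin.card_filter_le_and_lt {n a b : ℕ} (hb : b ≤ n) :
    #{i : Fin n | a ≤ (i : ℕ) ∧ (i : ℕ) < b} = b - a := by
  rw [← card_map Fin.valEmbedding, ← Nat.card_Ico]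
  congr 1
  ext j
  simp only [mem_map, mem_filter, mem_univ, true_and, Fin.valEmbedding_apply, mem_Ico]
  exact ⟨fun ⟨i, hi, hij⟩ => hij ▸ hi, fun hj => ⟨⟨j, by omega⟩, hj, rfl⟩⟩

theorem card_filter_partIndex_eq {l : List ℕ} {t : ℕ} (ht : t < l.length) :
    #{i : Fin l.sum | partIndex l i = t} = l[t] := by
  have : l.sum = (l.take (t + 1)).sum + (l.drop (t + 1)).sum := by
    rw [← List.sum_append, List.take_append_drop]
  simp_rw [partIndex_eq_iff (Fin.is_lt _)]
  rw [Fin.card_filter_le_and_lt (by omega), List.sum_take_succ _ _ ht]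
  omega

theorem Equiv.Perm.exists_comp_eq_of_card_fiber_eq {ι α : Type*} [Fintype ι] [DecidableEq α]
    {f g : ι → α} (h : ∀ a, #{i | f i = a} = #{i | g i = a}) :
    ∃ e : Equiv.Perm ι, ∀ i, f (e i) = g i := by
  have hfiber (a : α) : {i // g i = a} ≃ {i // f i = a} :=
    Fintype.equivOfCardEq (by simp only [Fintype.card_subtype, h])
  refine ⟨(Equiv.sigmaFiberEquiv g).symm.trans
    ((Equiv.sigmaCongrRight hfiber).trans (Equiv.sigmaFiberEquiv f)), fun i => ?_⟩
  simp only [Equiv.trans_apply, Equiv.sigmaCongrRight_apply, Equiv.sigmaFiberEquiv_apply]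
  exact (hfiber _ _).2

theorem Equiv.Perm.forall_image_preimage_singleton_eq_iff {α β : Type*} (σ : Equiv.Perm α)
    {f : α → β} {S : Set β} (hf : ∀ i, f i ∈ S) :
    (∀ t ∈ S, σ '' (f ⁻¹' {t}) = f ⁻¹' {t}) ↔ ∀ i, f (σ⁻¹ i) = f i := by
  simp only [Equiv.image_eq_preimage_symm, Set.ext_iff, Set.mem_preimage, Set.mem_singleton_iff]
  exact ⟨fun h i => (h _ (hf i) i).mpr rfl, fun h t _ i => by rw [← h i]; rfl⟩

theorem Finset.exists_nodup_pairwise_map_ge {α : Type*} (S : Finset α) (cnt : α → ℕ) :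
    ∃ cs : List α, cs.Nodup ∧ (∀ c, c ∈ cs ↔ c ∈ S) ∧
      (cs.map cnt).Pairwise (· ≥ ·) := by
  let cs := S.toList.mergeSort (fun c d => decide (cnt d ≤ cnt c))
  have hperm : cs.Perm S.toList := List.mergeSort_perm _ _
  refine ⟨cs, hperm.nodup_iff.mpr S.nodup_toList,
    fun c => by rw [hperm.mem_iff, mem_toList], ?_⟩
  have := List.pairwise_mergeSort (le := fun c d => decide (cnt d ≤ cnt c))
    (fun _ _ _ => by simp only [decide_eq_true_eq]; omega)
    (fun _ _ => by simp only [Bool.or_eq_true, decide_eq_true_eq]; omega) S.toList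
  exact List.pairwise_map.mpr (this.imp (by simp))

theorem MulAction.infinite_orbitRel_quotient (Γ X : Type*) [Group Γ] [Finite Γ] [MulAction Γ X]
    [Infinite X] : Infinite (MulAction.orbitRel.Quotient Γ X) := by
  by_contra hfin
  rw [not_infinite_iff_finite] at hfin
  have : Function.Surjective fun p : Γ × MulAction.orbitRel.Quotient Γ X => p.1 • p.2.out := by
    intro x
    obtain ⟨γ, hγ⟩ :=
      MulAction.mem_orbit_iff.mp (Quotient.mk_out (s := MulAction.orbitRel Γ X) x)
    exact ⟨(γ⁻¹, ⟦x⟧), by simp [← hγ]⟩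
  have := Finite.of_surjective _ this
  exact not_finite X

namespace WreathCM

variable {n : ℕ} {Γ : Subgroup (SpecialLinearGroup (Fin 2) ℂ)}

noncomputable instance : MulAction (G n Γ) (Fin n → Fin 2 → ℂ) where
  smul := act n Γ
  one_smul v := by funext i; exact one_mulVec (v i)
  mul_smul g h v := by funext i; exact (mulVec_mulVec (v ((g * h).right⁻¹ i)) _ _).symm

theorem smul_apply (g : G n Γ) (v : Fin n → Fin 2 → ℂ) (i : Fin n) :
    (g • v) i = g.left i • v (g.right⁻¹ i) := rfl

theorem stabSet_eq_stabilizer (v : Fin n → Fin 2 → ℂ) :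
    stabSet n Γ v = MulAction.stabilizer (G n Γ) v := rfl

theorem image_conj_stabSet (g : G n Γ) (v : Fin n → Fin 2 → ℂ) :
    (fun x => g * x * g⁻¹) '' stabSet n Γ v = stabSet n Γ (g • v) := by
  rw [stabSet_eq_stabilizer, stabSet_eq_stabilizer,
    MulAction.stabilizer_smul_eq_stabilizer_map_conj, Subgroup.coe_map]
  rfl

def blockIndex (m : ℕ) (lam : List ℕ) (i : Fin n) : ℕ := partIndex (m :: lam) i

theorem block_eq_setOf (m : ℕ) (lam : List ℕ) (t : ℕ) :
    block n m lam t =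
      {i : Fin n | ((m :: lam).take t).sum ≤ i ∧
        (i : ℕ) < ((m :: lam).take (t + 1)).sum} := by
  cases t <;> simp [block]

theorem mem_block_iff {m : ℕ} {lam : List ℕ} (hsum : m + lam.sum = n) (i : Fin n) (t : ℕ) :
    i ∈ block n m lam t ↔ blockIndex m lam i = t := by
  rw [block_eq_setOf, blockIndex, partIndex_eq_iff (by simp [hsum])]
  rfl

theorem blockIndex_lt {m : ℕ} {lam : List ℕ} (hsum : m + lam.sum = n) (i : Fin n) :
    blockIndex m lam i < lam.length + 1 :=
  partIndex_lt_length (l := m :: lam) (by simp [hsum])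

theorem card_filter_blockIndex_eq {m : ℕ} {lam : List ℕ} (hsum : m + lam.sum = n) {t : ℕ}
    (ht : t < lam.length + 1) : #{i : Fin n | blockIndex m lam i = t} = (m :: lam)[t] := by
  subst hsum
  exact card_filter_partIndex_eq (l := m :: lam) ht

theorem mem_H_iff {m : ℕ} {lam : List ℕ} (hsum : m + lam.sum = n) (g : G n Γ) :
    g ∈ H n Γ m lam ↔ (∀ i, blockIndex m lam (g.right⁻¹ i) = blockIndex m lam i) ∧
      ∀ i, blockIndex m lam i ≠ 0 → g.left i = 1 := by
  have hblock (t : ℕ) : block n m lam t = blockIndex m lam ⁻¹' {t} :=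
    Set.ext fun i => mem_block_iff hsum i t
  have hpos (i : Fin n) : m ≤ (i : ℕ) ↔ blockIndex m lam i ≠ 0 := by
    rw [Ne, ← mem_block_iff hsum, mem_block_zero, not_lt]
  simp only [H, Subgroup.mem_mk, Submonoid.mem_mk, Subsemigroup.mem_mk, hblock, hpos]
  exact and_congr_left' (g.right.forall_image_preimage_singleton_eq_iff (S := Set.Iic lam.length)
    fun i => Nat.lt_succ_iff.mp (blockIndex_lt hsum i))

abbrev OrbitSpace (Γ : Subgroup (SpecialLinearGroup (Fin 2) ℂ)) :=
  MulAction.orbitRel.Quotient Γ (Fin 2 → ℂ)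

/-- A representative of the orbit that `⟦0⟧ :: cs` assigns to the block `B_t`. -/
noncomputable def orbitRep (cs : List (OrbitSpace Γ)) (t : ℕ) : Fin 2 → ℂ :=
  ((⟦0⟧ :: cs).getD t ⟦0⟧).out

theorem mk_orbitRep (cs : List (OrbitSpace Γ)) (t : ℕ) :
    (⟦orbitRep cs t⟧ : OrbitSpace Γ) = (⟦0⟧ :: cs).getD t ⟦0⟧ :=
  Quotient.out_eq _

theorem orbitRep_zero (cs : List (OrbitSpace Γ)) : orbitRep cs 0 = 0 := by
  obtain ⟨γ, hγ⟩ := MulAction.mem_orbit_iff.mp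
    (Quotient.mk_out (s := MulAction.orbitRel Γ (Fin 2 → ℂ)) 0)
  rw [smul_zero] at hγ
  exact hγ.symm

theorem smul_orbitRep_eq_orbitRep_iff [Finite Γ] {cs : List (OrbitSpace Γ)}
    (hcs : (⟦0⟧ :: cs).Nodup) {s t : ℕ} (hs : s < cs.length + 1) (ht : t < cs.length + 1)
    (γ : Γ) : γ • orbitRep cs s = orbitRep cs t ↔ s = t ∧ (t ≠ 0 → γ = 1) := by
  have hinj {s t : ℕ} (hs : s < cs.length + 1) (ht : t < cs.length + 1) :
      (⟦orbitRep cs s⟧ : OrbitSpace Γ) = ⟦orbitRep cs t⟧ ↔ s = t := by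
    rw [mk_orbitRep, mk_orbitRep, List.getD_eq_getElem _ _ hs, List.getD_eq_getElem _ _ ht,
      hcs.getElem_inj_iff]
  constructor
  · intro h
    obtain rfl : s = t := (hinj hs ht).mp (Quotient.sound ⟨γ⁻¹, by simp [← h]⟩)
    refine ⟨rfl, fun hs0 => Subtype.ext ?_⟩
    have hne : orbitRep cs s ≠ 0 := fun h0 =>
      hs0 ((hinj hs (Nat.succ_pos _)).mp (by rw [h0, orbitRep_zero]))
    exact SpecialLinearGroup.eq_one_of_isOfFinOrder_of_smul_eq_self
      (Submonoid.isOfFinOrder_coe.mpr (isOfFinOrder_of_finite γ)) hne h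
  · rintro ⟨rfl, h1⟩
    rcases eq_or_ne s 0 with rfl | hs0
    · rw [orbitRep_zero, smul_zero]
    · rw [h1 hs0, one_smul]

noncomputable def canonical (m : ℕ) (lam : List ℕ) (cs : List (OrbitSpace Γ)) :
    Fin n → Fin 2 → ℂ :=
  fun i => orbitRep cs (blockIndex m lam i)

theorem stabSet_canonical [Finite Γ] {m : ℕ} {lam : List ℕ} (hsum : m + lam.sum = n)
    {cs : List (OrbitSpace Γ)} (hlen : cs.length = lam.length) (hcs : (⟦0⟧ :: cs).Nodup) :
    stabSet n Γ (canonical m lam cs) = H n Γ m lam := by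
  ext g
  rw [SetLike.mem_coe, mem_H_iff hsum, ← forall_and, stabSet_eq_stabilizer,
    SetLike.mem_coe, MulAction.mem_stabilizer_iff, funext_iff]
  refine forall_congr' fun i => ?_
  rw [← smul_orbitRep_eq_orbitRep_iff hcs (hlen ▸ blockIndex_lt hsum _)
    (hlen ▸ blockIndex_lt hsum _)]
  rfl

theorem exists_smul_eq_of_card_fiber_eq [DecidableEq (OrbitSpace Γ)]
    {u v : Fin n → Fin 2 → ℂ}
    (h : ∀ c : OrbitSpace Γ,
      #{i | (⟦v i⟧ : OrbitSpace Γ) = c} = #{i | (⟦u i⟧ : OrbitSpace Γ) = c}) :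
    ∃ g : G n Γ, g • v = u := by
  obtain ⟨e, he⟩ := Equiv.Perm.exists_comp_eq_of_card_fiber_eq h
  choose γ hγ using fun i => MulAction.mem_orbit_iff.mp (Quotient.exact (he i).symm)
  exact ⟨⟨γ, e⁻¹⟩, funext fun i => by rw [smul_apply, inv_inv]; exact hγ i⟩

theorem card_mk_canonical_eq [DecidableEq (OrbitSpace Γ)] {m : ℕ} {lam : List ℕ}
    (hsum : m + lam.sum = n) {cs : List (OrbitSpace Γ)} (hcs : (⟦0⟧ :: cs).Nodup)
    {cnt : OrbitSpace Γ → ℕ} (hcnt : (⟦0⟧ :: cs).map cnt = m :: lam)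
    (hzero : ∀ c ∉ ⟦0⟧ :: cs, cnt c = 0) (c : OrbitSpace Γ) :
    #{i : Fin n | (⟦canonical m lam cs i⟧ : OrbitSpace Γ) = c} = cnt c := by
  have hlen : cs.length = lam.length := by simpa using congrArg List.length hcnt
  have hmk (i : Fin n) : (⟦canonical m lam cs i⟧ : OrbitSpace Γ) =
      (⟦0⟧ :: cs)[blockIndex m lam i]'(by simpa [hlen] using blockIndex_lt hsum i) := by
    rw [canonical, mk_orbitRep, List.getD_eq_getElem]
  by_cases hc : c ∈ ⟦0⟧ :: cs
  · obtain ⟨t, ht, rfl⟩ := List.getElem_of_mem hc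
    simp_rw [hmk, hcs.getElem_inj_iff]
    rw [card_filter_blockIndex_eq hsum (by simpa [hlen] using ht)]
    simp only [← hcnt, List.getElem_map]
  · rw [hzero c hc, card_eq_zero, filter_eq_empty_iff]
    exact fun i _ h => hc (h ▸ hmk i ▸ List.getElem_mem _)

theorem exists_smul_eq_canonical (v : Fin n → Fin 2 → ℂ) :
    ∃ (m : ℕ) (lam : List ℕ) (cs : List (OrbitSpace Γ)) (g : G n Γ),
      lam.Pairwise (· ≥ ·) ∧ (∀ x ∈ lam, 0 < x) ∧ m + lam.sum = n ∧
        cs.length = lam.length ∧ (⟦0⟧ :: cs).Nodup ∧ g • v = canonical m lam cs := by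
  classical
  set f : Fin n → OrbitSpace Γ := fun i => ⟦v i⟧
  set cnt : OrbitSpace Γ → ℕ := fun c => #{i | f i = c}
  set z : OrbitSpace Γ := ⟦0⟧
  obtain ⟨cs, hnd, hmem, hsorted⟩ := ((univ.image f).erase z).exists_nodup_pairwise_map_ge cnt
  have hcs : (z :: cs).Nodup :=
    List.nodup_cons.mpr ⟨fun h => (mem_erase.mp ((hmem z).mp h)).1 rfl, hnd⟩
  have hmemL (c : OrbitSpace Γ) : c ∈ z :: cs ↔ c ∈ insert z (univ.image f) := by
    rw [List.mem_cons, hmem, mem_insert, mem_erase]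
    tauto
  have hf (i : Fin n) : f i ∈ insert z (univ.image f) :=
    mem_insert_of_mem (mem_image_of_mem f (mem_univ i))
  have hsum : cnt z + (cs.map cnt).sum = n := by
    calc cnt z + (cs.map cnt).sum = ∑ c ∈ (z :: cs).toFinset, cnt c :=
          (List.sum_toFinset _ hcs).symm
      _ = ∑ c ∈ insert z (univ.image f), cnt c := by
          congr 1; ext c; rw [List.mem_toFinset, hmemL]
      _ = n := by rw [← card_eq_sum_card_fiberwise fun i _ => hf i, card_univ, Fintype.card_fin]
  have hzero (c) (hc : c ∉ z :: cs) : cnt c = 0 := by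
    rw [card_eq_zero, filter_eq_empty_iff]
    exact fun i _ h => hc ((hmemL c).mpr (h ▸ hf i))
  obtain ⟨g, hg⟩ := exists_smul_eq_of_card_fiber_eq (u := canonical (cnt z) (cs.map cnt) cs)
    fun c => (card_mk_canonical_eq hsum hcs rfl hzero c).symm
  refine ⟨cnt z, cs.map cnt, cs, g, hsorted, ?_, hsum, (List.length_map _).symm, hcs, hg⟩
  simp only [List.mem_map, forall_exists_index, and_imp, forall_apply_eq_imp_iff₂]
  intro c hc
  obtain ⟨i, -, hi⟩ := mem_image.mp (mem_of_mem_erase ((hmem c).mp hc))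
  exact card_pos.mpr ⟨i, mem_filter.mpr ⟨mem_univ i, hi⟩⟩

theorem exists_stabSet_eq_H [Finite Γ] {m : ℕ} {lam : List ℕ} (hsum : m + lam.sum = n) :
    ∃ v : Fin n → Fin 2 → ℂ, stabSet n Γ v = H n Γ m lam := by
  have : Infinite (OrbitSpace Γ) := MulAction.infinite_orbitRel_quotient Γ (Fin 2 → ℂ)
  obtain ⟨s, hs, hcard⟩ := (Set.infinite_univ.sdiff
    (Set.finite_singleton (⟦0⟧ : OrbitSpace Γ))).exists_subset_card_eq lam.length
  refine ⟨canonical m lam s.toList, stabSet_canonical hsum (by simpa using hcard) ?_⟩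
  exact List.nodup_cons.mpr ⟨fun h => (hs (mem_toList.mp h)).2 rfl, s.nodup_toList⟩

end WreathCM

open WreathCM Matrix in
theorem stabilizers_are_parabolics_general (n : ℕ)
    (Γ : Subgroup (SpecialLinearGroup (Fin 2) ℂ)) [Finite Γ] :
    (∀ v : Fin n → Fin 2 → ℂ,
      ∃ (m : ℕ) (lam : List ℕ) (g : G n Γ),
        m ≤ n ∧ lam.Pairwise (· ≥ ·) ∧ (∀ x ∈ lam, 0 < x) ∧ m + lam.sum = n ∧
        (fun x => g * x * g⁻¹) '' stabSet n Γ v = (H n Γ m lam : Set (G n Γ))) ∧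
    (∀ (m : ℕ) (lam : List ℕ), lam.Pairwise (· ≥ ·) → (∀ x ∈ lam, 0 < x) →
      m + lam.sum = n →
      ∃ v : Fin n → Fin 2 → ℂ, stabSet n Γ v = (H n Γ m lam : Set (G n Γ))) := by
  refine ⟨fun v => ?_, fun m lam _ _ hsum => exists_stabSet_eq_H hsum⟩
  obtain ⟨m, lam, cs, g, hsorted, hpos, hsum, hlen, hcs, hg⟩ := exists_smul_eq_canonical v
  refine ⟨m, lam, g, by omega, hsorted, hpos, hsum, ?_⟩
  rw [image_conj_stabSet, hg, stabSet_canonical hsum hlen hcs]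

open WreathCM Matrix in
/-- For every `v ∈ V` there exist an integer `0 ≤ m ≤ n`, a partition `λ` of `n − m`,
and `g ∈ G` such that `g·Stab_G(v)·g⁻¹ = H(m,λ)`; conversely, every subgroup `H(m,λ)`
with `m + |λ| = n` is the stabilizer in `G` of some point of `V`. -/
theorem stabilizers_are_parabolics (n : ℕ) (hn : 1 ≤ n)
    (Γ : Subgroup (SpecialLinearGroup (Fin 2) ℂ)) [Finite Γ] :
    (∀ v : Fin n → Fin 2 → ℂ,
      ∃ (m : ℕ) (lam : List ℕ) (g : G n Γ),
        m ≤ n ∧ lam.Pairwise (· ≥ ·) ∧ (∀ x ∈ lam, 0 < x) ∧ m + lam.sum = n ∧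
        (fun x => g * x * g⁻¹) '' stabSet n Γ v = (H n Γ m lam : Set (G n Γ))) ∧
    (∀ (m : ℕ) (lam : List ℕ), lam.Pairwise (· ≥ ·) → (∀ x ∈ lam, 0 < x) →
      m + lam.sum = n →
      ∃ v : Fin n → Fin 2 → ℂ, stabSet n Γ v = (H n Γ m lam : Set (G n Γ))) :=
  stabilizers_are_parabolics_general n Γ
end

section
/- Assume c(δ) = −1. Then R_c = R_c⁺ ∪ (−R_c⁺), and every element of R_c⁺ is a finite sum of (one or more) elements of Δ(c); in other words, Δ(c) is a set of simple roots for the root system R_c whose corresponding positive roots are precisely R_c⁺. -/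
open Finset

namespace AffineRoots

/-- The vertex set `I = {0,1,…,r}` of the graph. -/
abbrev I (r : ℕ) := Fin (r + 1)

/-- The root lattice `Q = ℤ^I`. -/
abbrev Q (r : ℕ) := I r → ℤ

variable (r : ℕ)

/-- The standard basis vector (simple root) `e_i` of `Q`. -/
def e (i : I r) : Q r := Pi.single i 1

/-- The Cartan pairing matrix `(e_i, e_j) = 2·[i=j] − a_{ij}` attached to a graph with
`a i j` edges between `i` and `j`. -/
def cartan (a : I r → I r → ℕ) (i j : I r) : ℤ :=
  (if i = j then 2 else 0) - (a i j : ℤ)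

/-- The symmetric bilinear form on `Q` determined by the Cartan pairing. -/
def B (a : I r → I r → ℕ) (α β : Q r) : ℤ :=
  ∑ i, ∑ j, α i * cartan r a i j * β j

/-- The reflection `s_i(α) = α − (α,e_i)·e_i`. -/
def refl (a : I r → I r → ℕ) (i : I r) (α : Q r) : Q r :=
  α - B r a α (e r i) • e r i

/-- The Weyl group `W`: the group of bijections of `Q` generated by the reflections. -/
def W (a : I r → I r → ℕ) : Subgroup (Equiv.Perm (Q r)) :=
  Subgroup.closure {σ | ∃ i : I r, ∀ α, σ α = refl r a i α}

/-- The support of `α` is connected in the graph. -/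
def SuppConnected (a : I r → I r → ℕ) (α : Q r) : Prop :=
  ∀ i j : I r, α i ≠ 0 → α j ≠ 0 →
    Relation.ReflTransGen (fun x y => α x ≠ 0 ∧ α y ≠ 0 ∧ 0 < a x y) i j

/-- The fundamental region `F`: nonzero `α ∈ ℕ^I` with connected support and
`(α,e_i) ≤ 0` for all `i`. -/
def Fund (a : I r → I r → ℕ) : Set (Q r) :=
  {α | α ≠ 0 ∧ (∀ i, 0 ≤ α i) ∧ SuppConnected r a α ∧ ∀ i, B r a α (e r i) ≤ 0}

/-- The real roots: the `W`-orbits of the basis vectors. -/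
def RealRoots (a : I r → I r → ℕ) : Set (Q r) :=
  {α | ∃ σ ∈ W r a, ∃ i, α = σ (e r i)}

/-- The imaginary roots: `W·F` and its negative. -/
def ImRoots (a : I r → I r → ℕ) : Set (Q r) :=
  {α | ∃ σ ∈ W r a, ∃ β ∈ Fund r a, α = σ β ∨ α = -(σ β)}

/-- The root system `R`, consisting of all real and imaginary roots. -/
def Roots (a : I r → I r → ℕ) : Set (Q r) := RealRoots r a ∪ ImRoots r a

/-- The positive roots `R⁺ = R ∩ ℕ^I`. -/
def PosRoots (a : I r → I r → ℕ) : Set (Q r) :=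
  {α ∈ Roots r a | ∀ i, 0 ≤ α i}

/-- `R_c = {α ∈ R : c(α) = 0}`. -/
def Rc (a : I r → I r → ℕ) (c : Q r →ₗ[ℤ] ℂ) : Set (Q r) :=
  {α ∈ Roots r a | c α = 0}

/-- `R_c⁺ = R_c ∩ R⁺`. -/
def RcPos (a : I r → I r → ℕ) (c : Q r →ₗ[ℤ] ℂ) : Set (Q r) :=
  Rc r a c ∩ PosRoots r a

/-- `Δ(c)`: the minimal elements of `R_c⁺`, i.e. those which cannot be written as a sum
of two elements of `R_c⁺`. -/
def Dc (a : I r → I r → ℕ) (c : Q r →ₗ[ℤ] ℂ) : Set (Q r) :=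
  {α ∈ RcPos r a c | ¬ ∃ β ∈ RcPos r a c, ∃ γ ∈ RcPos r a c, α = β + γ}

/-- The hypotheses characterizing a simply laced affine Dynkin graph, together with the
distinguished imaginary root `δ`: the graph (with `a i j` edges between `i` and `j`) is
symmetric, loopless and connected; the Cartan form is positive semidefinite; and the
radical of the form is `ℤδ`, where `δ` has positive coordinates and `δ_0 = 1`. -/
structure AffineData (a : I r → I r → ℕ) (δ : Q r) : Prop where
  symm : ∀ i j, a i j = a j i
  noloops : ∀ i, a i i = 0
  connected : ∀ i j : I r, Relation.ReflTransGen (fun x y => 0 < a x y) i j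
  posSemidef : ∀ α : Q r, 0 ≤ B r a α α
  delta_pos : ∀ i, 0 < δ i
  delta_zero : δ 0 = 1
  radical : ∀ α : Q r, (∀ β, B r a α β = 0) ↔ ∃ n : ℤ, α = n • δ

end AffineRoots

/-!
Imaginary roots are nonzero multiples of `δ`, so `c(δ) ≠ 0` leaves only real roots in `R_c`,
and these have norm `(α, α) = 2`. Writing `α = α⁺ - α⁻` with disjoint supports gives
`2 = (α⁺, α⁺) + (α⁻, α⁻) - 2 (α⁺, α⁻)` with a nonpositive cross term; both norms are even and
nonnegative, so one of them vanishes. That part then lies in the radical `ℤδ`, hence is zero or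
has full support, and either way `α` is sign-coherent. The decomposition into elements of `Δ(c)`
follows by induction on the height `∑ i, α i`.
-/

theorem exists_fin_sum_of_indecomposable {M : Type*} [AddCommMonoid M] {S : Set M}
    (h : M →+ ℤ) (hpos : ∀ x ∈ S, 0 < h x) {x : M} (hx : x ∈ S) :
    ∃ (k : ℕ) (f : Fin k → M), 0 < k ∧
      (∀ t, f t ∈ {y ∈ S | ¬ ∃ β ∈ S, ∃ γ ∈ S, y = β + γ}) ∧ x = ∑ t, f t := by
  induction hn : (h x).toNat using Nat.strong_induction_on generalizing x with
  | _ n ih =>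
  by_cases hdec : ∃ β ∈ S, ∃ γ ∈ S, x = β + γ
  · obtain ⟨β, hβ, γ, hγ, rfl⟩ := hdec
    have hβpos := hpos β hβ
    have hγpos := hpos γ hγ
    rw [map_add] at hn
    obtain ⟨k, f, hk, hf, rfl⟩ := ih _ (by omega) hβ rfl
    obtain ⟨l, g, hl, hg, rfl⟩ := ih _ (by omega) hγ rfl
    refine ⟨k + l, Fin.append f g, by omega, Fin.addCases ?_ ?_, by simp [Fin.sum_univ_add]⟩
    · simpa using hf
    · simpa using hg
  · exact ⟨1, fun _ => x, one_pos, fun _ => ⟨hx, hdec⟩, by simp⟩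

namespace AffineRoots

variable {r : ℕ} {a : I r → I r → ℕ}

section Form

lemma B_eq_toLinearMap₂' (x y : Q r) :
    B r a x y = Matrix.toLinearMap₂' ℤ (Matrix.of (cartan r a)) x y := by
  simp only [B, Matrix.toLinearMap₂'_apply, Matrix.of_apply, smul_eq_mul]
  exact sum_congr rfl fun i _ => sum_congr rfl fun j _ => by ring

variable (x y z : Q r) (n : ℤ)

lemma B_add_left : B r a (x + y) z = B r a x z + B r a y z := by simp [B_eq_toLinearMap₂']
lemma B_add_right : B r a x (y + z) = B r a x y + B r a x z := by simp [B_eq_toLinearMap₂']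
lemma B_sub_left : B r a (x - y) z = B r a x z - B r a y z := by simp [B_eq_toLinearMap₂']
lemma B_sub_right : B r a x (y - z) = B r a x y - B r a x z := by simp [B_eq_toLinearMap₂']
lemma B_neg_left : B r a (-x) y = -B r a x y := by simp [B_eq_toLinearMap₂']
lemma B_neg_right : B r a x (-y) = -B r a x y := by simp [B_eq_toLinearMap₂']
lemma B_smul_left : B r a (n • x) y = n * B r a x y := by
  rw [B_eq_toLinearMap₂', B_eq_toLinearMap₂', map_zsmul, LinearMap.smul_apply, smul_eq_mul]
lemma B_smul_right : B r a x (n • y) = n * B r a x y := by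
  rw [B_eq_toLinearMap₂', B_eq_toLinearMap₂', map_zsmul, smul_eq_mul]

end Form

lemma B_symm (hs : ∀ i j, a i j = a j i) (x y : Q r) : B r a x y = B r a y x := by
  rw [B, sum_comm, B]
  refine sum_congr rfl fun j _ => sum_congr rfl fun i _ => ?_
  simp only [cartan, hs i j, eq_comm (a := i)]
  ring

lemma B_e_self (hnl : ∀ i, a i i = 0) (i : I r) : B r a (e r i) (e r i) = 2 := by
  simp [B, e, Pi.single_apply, cartan, hnl]

lemma B_eq_sum_mul_B_e (x y : Q r) : B r a x y = ∑ j, y j * B r a x (e r j) := by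
  simp only [B, e, Pi.single_apply, mul_ite, mul_one, mul_zero, sum_ite_eq', mem_univ,
    if_true, mul_sum]
  rw [sum_comm]
  exact sum_congr rfl fun j _ => sum_congr rfl fun i _ => by ring

lemma even_B_self (hs : ∀ i j, a i j = a j i) (hnl : ∀ i, a i i = 0) (x : Q r) :
    Even (B r a x x) := by
  rw [← univ_sum_single x]
  refine sum_induction _ (fun y => Even (B r a y y)) (fun y z hy hz => ?_) (by simp [B]) ?_
  · have hexp : B r a (y + z) (y + z) = B r a y y + B r a z z + 2 * B r a y z := by
      rw [B_add_left, B_add_right, B_add_right, B_symm hs z y]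
      ring
    rw [hexp]
    exact (hy.add hz).add (even_two_mul _)
  · intro i _
    have hsingle : Pi.single i (x i) = x i • e r i := by
      rw [e, ← Pi.single_smul', smul_eq_mul, mul_one]
    rw [hsingle, B_smul_left, B_smul_right, B_e_self hnl]
    exact ⟨x i * x i, by ring⟩

/- Positivity of `(t • x + y, t • x + y) = 2 t (x, y) + (y, y)` fails at
`t = -(x, y) ((y, y) + 1)` unless `(x, y) = 0`. -/
lemma B_eq_zero_of_B_self_eq_zero (hs : ∀ i j, a i j = a j i) (hpsd : ∀ x : Q r, 0 ≤ B r a x x)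
    {x : Q r} (hx : B r a x x = 0) (y : Q r) : B r a x y = 0 := by
  by_contra hX
  set X := B r a x y
  set C := B r a y y
  have key := hpsd ((-X * (C + 1)) • x + y)
  simp only [B_add_left, B_add_right, B_smul_left, B_smul_right, hx, B_symm hs y x] at key
  have hX2 : 1 ≤ X * X := by rcases lt_or_gt_of_ne hX with h | h <;> nlinarith
  nlinarith [hpsd y]

lemma B_posPart_negPart_nonpos (x : Q r) : B r a x⁺ x⁻ ≤ 0 := by
  refine sum_nonpos fun i _ => sum_nonpos fun j _ => ?_
  rw [Pi.posPart_apply, Pi.negPart_apply]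
  by_cases hij : i = j
  · subst hij
    rcases le_total 0 (x i) with h | h
    · simp [negPart_eq_zero.mpr h]
    · simp [posPart_eq_zero.mpr h]
  · have hc : cartan r a i j ≤ 0 := by simp [cartan, hij]
    exact mul_nonpos_of_nonpos_of_nonneg
      (mul_nonpos_of_nonneg_of_nonpos (posPart_nonneg _) hc) (negPart_nonneg _)

namespace AffineData

variable {δ : Q r}

lemma exists_eq_zsmul_of_B_self_eq_zero (hd : AffineData r a δ) {x : Q r}
    (hx : B r a x x = 0) : ∃ n : ℤ, x = n • δ :=
  (hd.radical x).mp (B_eq_zero_of_B_self_eq_zero hd.symm hd.posSemidef hx)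

lemma eq_zero_or_forall_pos_of_B_self_eq_zero (hd : AffineData r a δ) {y : Q r} (hy : 0 ≤ y)
    (hyy : B r a y y = 0) : y = 0 ∨ ∀ i, 0 < y i := by
  obtain ⟨n, rfl⟩ := hd.exists_eq_zsmul_of_B_self_eq_zero hyy
  rcases lt_trichotomy n 0 with hn | rfl | hn
  · exact absurd (hy 0) (not_le.mpr (mul_neg_of_neg_of_pos hn (hd.delta_pos 0)))
  · exact Or.inl (zero_smul _ _)
  · exact Or.inr fun i => mul_pos hn (hd.delta_pos i)

lemma nonneg_or_nonpos_of_B_self_eq_two (hd : AffineData r a δ) {x : Q r}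
    (hx : B r a x x = 2) : 0 ≤ x ∨ x ≤ 0 := by
  have hsplit : B r a x x = B r a x⁺ x⁺ + B r a x⁻ x⁻ - 2 * B r a x⁺ x⁻ := by
    conv_lhs => rw [← posPart_sub_negPart x]
    rw [B_sub_left, B_sub_right, B_sub_right, B_symm hd.symm x⁻ x⁺]
    ring
  have hcross := B_posPart_negPart_nonpos (a := a) x
  obtain ⟨k, hk⟩ := even_B_self hd.symm hd.noloops x⁺
  obtain ⟨l, hl⟩ := even_B_self hd.symm hd.noloops x⁻
  have hnorm_pos := hd.posSemidef x⁺
  have hnorm_neg := hd.posSemidef x⁻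
  have hzero : B r a x⁺ x⁺ = 0 ∨ B r a x⁻ x⁻ = 0 := by omega
  rcases hzero with h | h
  · rcases hd.eq_zero_or_forall_pos_of_B_self_eq_zero (posPart_nonneg x) h with h0 | hpos
    · exact Or.inr (posPart_eq_zero.mp h0)
    · exact Or.inl fun i => (posPart_pos_iff.mp (hpos i)).le
  · rcases hd.eq_zero_or_forall_pos_of_B_self_eq_zero (negPart_nonneg x) h with h0 | hneg
    · exact Or.inl (negPart_eq_zero.mp h0)
    · exact Or.inr fun i => (negPart_pos_iff.mp (hneg i)).le

end AffineData

section WeylGroup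

variable (r a) in
def isometryGroup : Subgroup (Equiv.Perm (Q r)) where
  carrier := {σ | (∀ x y, σ (x + y) = σ x + σ y) ∧ ∀ x y, B r a (σ x) (σ y) = B r a x y}
  mul_mem' := fun ⟨hadd, hB⟩ ⟨hadd', hB'⟩ =>
    ⟨fun x y => by simp [hadd, hadd'], fun x y => by simp [hB, hB']⟩
  one_mem' := ⟨fun _ _ => rfl, fun _ _ => rfl⟩
  inv_mem' := fun {σ} ⟨hadd, hB⟩ =>
    ⟨fun x y => σ.injective (by simp [hadd]), fun x y => by rw [← hB]; simp⟩

lemma refl_involutive (hnl : ∀ i, a i i = 0) (i : I r) : Function.Involutive (refl r a i) := by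
  intro x
  simp only [refl, B_sub_left, B_smul_left, B_e_self hnl]
  rw [sub_sub, ← add_smul]
  ring_nf

lemma refl_mem_W (hnl : ∀ i, a i i = 0) (i : I r) : (refl_involutive hnl i).toPerm ∈ W r a :=
  Subgroup.subset_closure ⟨i, fun _ => rfl⟩

lemma refl_add (i : I r) (x y : Q r) : refl r a i (x + y) = refl r a i x + refl r a i y := by
  simp only [refl, B_add_left, add_smul]
  abel

lemma B_refl_refl (hs : ∀ i j, a i j = a j i) (hnl : ∀ i, a i i = 0) (i : I r) (x y : Q r) :
    B r a (refl r a i x) (refl r a i y) = B r a x y := by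
  simp only [refl, B_sub_left, B_sub_right, B_smul_left, B_smul_right, B_e_self hnl,
    B_symm hs (e r i) y]
  ring

lemma W_le_isometryGroup (hs : ∀ i j, a i j = a j i) (hnl : ∀ i, a i i = 0) :
    W r a ≤ isometryGroup r a :=
  (Subgroup.closure_le _).mpr fun _ ⟨i, hσ⟩ =>
    ⟨fun x y => by simp only [hσ, refl_add], fun x y => by simp only [hσ, B_refl_refl hs hnl]⟩

variable {σ : Equiv.Perm (Q r)}

lemma map_zero_of_mem_isometryGroup (hσ : σ ∈ isometryGroup r a) : σ 0 = 0 :=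
  map_zero (AddMonoidHom.mk' σ hσ.1)

lemma map_neg_of_mem_isometryGroup (hσ : σ ∈ isometryGroup r a) (x : Q r) : σ (-x) = -σ x :=
  map_neg (AddMonoidHom.mk' σ hσ.1) x

end WeylGroup

section Roots

lemma B_self_of_mem_RealRoots (hs : ∀ i j, a i j = a j i) (hnl : ∀ i, a i i = 0) {x : Q r}
    (hx : x ∈ RealRoots r a) : B r a x x = 2 := by
  obtain ⟨σ, hσ, i, rfl⟩ := hx
  rw [(W_le_isometryGroup hs hnl hσ).2, B_e_self hnl]

lemma B_self_nonpos_of_mem_Fund {β : Q r} (hβ : β ∈ Fund r a) : B r a β β ≤ 0 := by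
  rw [B_eq_sum_mul_B_e]
  exact sum_nonpos fun j _ => mul_nonpos_of_nonneg_of_nonpos (hβ.2.1 j) (hβ.2.2.2 j)

lemma refl_e_self (hnl : ∀ i, a i i = 0) (i : I r) : refl r a i (e r i) = -e r i := by
  rw [refl, B_e_self hnl, two_smul, sub_add_cancel_left]

lemma neg_mem_Roots (hs : ∀ i j, a i j = a j i) (hnl : ∀ i, a i i = 0) {x : Q r}
    (hx : x ∈ Roots r a) : -x ∈ Roots r a := by
  rcases hx with ⟨σ, hσ, i, rfl⟩ | ⟨σ, hσ, β, hβ, hx⟩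
  · refine Or.inl ⟨σ * (refl_involutive hnl i).toPerm, mul_mem hσ (refl_mem_W hnl i), i, ?_⟩
    rw [Equiv.Perm.mul_apply, Function.Involutive.coe_toPerm, refl_e_self hnl,
      map_neg_of_mem_isometryGroup (W_le_isometryGroup hs hnl hσ)]
  · refine Or.inr ⟨σ, hσ, β, hβ, ?_⟩
    rcases hx with rfl | rfl
    · exact Or.inr rfl
    · exact Or.inl (neg_neg _)

variable {δ : Q r} {c : Q r →ₗ[ℤ] ℂ}

lemma neg_mem_Rc (hs : ∀ i j, a i j = a j i) (hnl : ∀ i, a i i = 0) {x : Q r}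
    (hx : x ∈ Rc r a c) : -x ∈ Rc r a c :=
  ⟨neg_mem_Roots hs hnl hx.1, by rw [map_neg, hx.2, neg_zero]⟩

namespace AffineData

lemma exists_eq_zsmul_of_mem_ImRoots (hd : AffineData r a δ) {x : Q r}
    (hx : x ∈ ImRoots r a) : ∃ n : ℤ, n ≠ 0 ∧ x = n • δ := by
  obtain ⟨σ, hσ, β, hβ, hx⟩ := hx
  have hσ' := W_le_isometryGroup hd.symm hd.noloops hσ
  have hββ : B r a β β = 0 := le_antisymm (B_self_nonpos_of_mem_Fund hβ) (hd.posSemidef β)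
  have hσβ : σ β ≠ 0 := by
    rw [← map_zero_of_mem_isometryGroup hσ']
    exact σ.injective.ne hβ.1
  have hxx : B r a x x = 0 := by
    rcases hx with rfl | rfl <;> simp only [B_neg_left, B_neg_right, neg_neg, hσ'.2, hββ]
  have hx0 : x ≠ 0 := by rcases hx with rfl | rfl <;> simpa using hσβ
  obtain ⟨n, rfl⟩ := hd.exists_eq_zsmul_of_B_self_eq_zero hxx
  exact ⟨n, by rintro rfl; simp at hx0, rfl⟩

lemma B_self_of_mem_Rc (hd : AffineData r a δ) (hc : c δ ≠ 0) {x : Q r} (hx : x ∈ Rc r a c) :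
    B r a x x = 2 := by
  obtain ⟨hx | hx, hcx⟩ := hx
  · exact B_self_of_mem_RealRoots hd.symm hd.noloops hx
  · obtain ⟨n, hn, rfl⟩ := hd.exists_eq_zsmul_of_mem_ImRoots hx
    rw [map_zsmul, zsmul_eq_mul, mul_eq_zero, Int.cast_eq_zero] at hcx
    exact (hcx.elim hn hc).elim

lemma Rc_eq_RcPos_union_neg (hd : AffineData r a δ) (hc : c δ ≠ 0) :
    Rc r a c = RcPos r a c ∪ -RcPos r a c := by
  ext x
  refine ⟨fun hx => ?_, ?_⟩
  · have hnx := neg_mem_Rc hd.symm hd.noloops hx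
    rcases hd.nonneg_or_nonpos_of_B_self_eq_two (hd.B_self_of_mem_Rc hc hx) with h | h
    · exact Or.inl ⟨hx, hx.1, h⟩
    · exact Or.inr ⟨hnx, hnx.1, neg_nonneg.mpr h⟩
  · rintro (hx | hx)
    · exact hx.1
    · simpa using neg_mem_Rc hd.symm hd.noloops hx.1

end AffineData

variable (r) in
def height : Q r →+ ℤ := AddMonoidHom.mk' (fun x => ∑ i, x i) fun _ _ => sum_add_distrib

lemma AffineData.height_pos_of_mem_RcPos (hd : AffineData r a δ) (hc : c δ ≠ 0) {x : Q r}
    (hx : x ∈ RcPos r a c) : 0 < height r x := by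
  have hx0 : x ≠ 0 := by
    rintro rfl
    simpa [B] using hd.B_self_of_mem_Rc hc hx.1
  obtain ⟨i, hi⟩ := Function.ne_iff.mp hx0
  exact sum_pos' (fun j _ => hx.2.2 j) ⟨i, mem_univ i, (hx.2.2 i).lt_of_ne (Ne.symm hi)⟩

end Roots

end AffineRoots

open AffineRoots in
/-- Assume `c(δ) = −1`.  Then `R_c = R_c⁺ ∪ (−R_c⁺)`, and every element of `R_c⁺` is a
finite sum of (one or more) elements of `Δ(c)`; in other words, `Δ(c)` is a set of simple
roots for the root system `R_c` whose corresponding positive roots are precisely `R_c⁺`. -/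
theorem Dc_is_simple_system (r : ℕ) (a : I r → I r → ℕ) (δ : Q r)
    (hdata : AffineData r a δ) (c : Q r →ₗ[ℤ] ℂ) (hc : c δ = -1) :
    Rc r a c = RcPos r a c ∪ (-(RcPos r a c)) ∧
    ∀ α ∈ RcPos r a c, ∃ (k : ℕ) (f : Fin k → Q r),
      0 < k ∧ (∀ t, f t ∈ Dc r a c) ∧ α = ∑ t, f t := by
  have hc' : c δ ≠ 0 := by simp [hc]
  exact ⟨hdata.Rc_eq_RcPos_union_neg hc', fun α hα =>
    exists_fin_sum_of_indecomposable (height r) (fun _ => hdata.height_pos_of_mem_RcPos hc') hα⟩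
end

section
/- Let J ⊆ ℤ/ℓℤ, let μ be a J-core, and let ν be an ℓ-core of μ, i.e., an ℓ-core obtained from μ by a sequence of elementary ℓ-steps. Then ν is a J-core. -/
/-- The `ℓ`-residue of the box in row `r` and column `s` (0-indexed) is `s − r` modulo `ℓ`. -/
def boxRes (ℓ : ℕ) (c : ℕ × ℕ) : ZMod ℓ := (c.2 : ZMod ℓ) - (c.1 : ZMod ℓ)

/-- A box `c` of the Young diagram `λ` is removable if deleting it leaves a Young diagram. -/
def Removable (lam : YoungDiagram) (c : ℕ × ℕ) : Prop :=
  c ∈ lam.cells ∧ ∃ mu : YoungDiagram, mu.cells = lam.cells.erase c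

/-- `Removals λ μ` holds if `μ` is obtained from `λ` by deleting a sequence of
removable boxes (i.e. `μ ≤ λ`). -/
def Removals (lam mu : YoungDiagram) : Prop :=
  Relation.ReflTransGen
    (fun x y : YoungDiagram => ∃ c ∈ x.cells, y.cells = x.cells.erase c) lam mu

/-- An elementary `ℓ`-step from `λ` is a partition `μ ≤ λ` such that the diagram of `λ`
differs from that of `μ` by exactly `ℓ` boxes having pairwise distinct `ℓ`-residues. -/
def ElemStep (ℓ : ℕ) (lam mu : YoungDiagram) : Prop :=
  Removals lam mu ∧ (lam.cells \ mu.cells).card = ℓ ∧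
    ∀ c ∈ lam.cells \ mu.cells, ∀ c' ∈ lam.cells \ mu.cells,
      c ≠ c' → boxRes ℓ c ≠ boxRes ℓ c'

/-- A partition is an `ℓ`-core if it admits no elementary `ℓ`-step. -/
def IsLCore (ℓ : ℕ) (lam : YoungDiagram) : Prop := ¬ ∃ mu, ElemStep ℓ lam mu

/-- A `J`-core is a partition with no `J`-removable boxes, i.e. no removable box whose
`ℓ`-residue lies in `J`. -/
def IsJCore (ℓ : ℕ) (J : Set (ZMod ℓ)) (lam : YoungDiagram) : Prop :=
  ¬ ∃ c, Removable lam c ∧ boxRes ℓ c ∈ J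

/-!
Encode a partition `λ` by its abacus, the bead positions `λᵢ - i`. Removing a box of content
`k` (column minus row) moves a bead from `k + 1` to the empty position `k`, so, for each residue
`j`, the number of beads congruent to `j` in a window that contains all the moves changes by
`[k ≡ j] - [k + 1 ≡ j]`.
An elementary `ℓ`-step removes one box of each residue, so these counts are the same for `μ` and
`ν`.

Suppose `ν` had a removable box of residue `j ∈ J`: a bead `b ≡ j + 1` above the gap `b - 1`.
In the `J`-core `μ`, every bead `z ≡ j + 1` has `z - 1` occupied, so `z ↦ z - 1` injects the
beads `≡ j + 1` into the beads `≡ j`. In the `ℓ`-core `ν`, beads are closed under `z ↦ z - ℓ`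
(otherwise sliding a bead down by `ℓ` would remove an `ℓ`-rim hook), so `z ↦ z + 1` injects the
beads `≡ j` into the beads `≡ j + 1` and misses `b`. Comparing counts gives a contradiction.
-/

open Finset

theorem Function.Injective.range_update {α β : Type*} [DecidableEq α] {f : α → β}
    (hf : Function.Injective f) (i : α) (v : β) :
    Set.range (Function.update f i v) = insert v (Set.range f \ {f i}) := by
  ext z
  simp only [Set.mem_range, Set.mem_insert_iff, Set.mem_sdiff, Set.mem_singleton_iff]
  constructor
  · rintro ⟨k, rfl⟩
    by_cases hk : k = i
    · subst hk; simp
    · rw [Function.update_of_ne hk]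
      exact Or.inr ⟨⟨k, rfl⟩, fun h => hk (hf h)⟩
  · rintro (rfl | ⟨⟨k, rfl⟩, hk⟩)
    · exact ⟨i, by simp⟩
    · refine ⟨k, ?_⟩
      rw [Function.update_of_ne fun h => hk (congrArg f h)]

theorem card_filter_eq_and {α : Type*} [DecidableEq α] (s : Finset α) (p : α → Prop)
    [DecidablePred p] (a : α) : #{z ∈ s | z = a ∧ p z} = if a ∈ s ∧ p a then 1 else 0 := by
  rw [filter_and, filter_eq']
  split_ifs <;> simp_all

theorem card_filter_eq_one_of_injOn {ℓ : ℕ} [NeZero ℓ] {α : Type*} {f : α → ZMod ℓ}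
    {D : Finset α} (hD : #D = ℓ) (hf : Set.InjOn f D) (j : ZMod ℓ) : #{c ∈ D | f c = j} = 1 := by
  classical
  have himg : D.image f = univ := eq_univ_of_card _ (by rw [card_image_of_injOn hf, hD, ZMod.card])
  obtain ⟨c, hc, rfl⟩ := mem_image.1 (himg ▸ mem_univ j)
  exact card_eq_one.2 ⟨c, by ext d; simp only [mem_filter, mem_singleton]; grind [Set.InjOn]⟩

section BeadCount

variable {ℓ : ℕ}

open Classical in
noncomputable def beadCount (x N : ℤ) (j : ZMod ℓ) (B : Set ℤ) : ℕ :=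
  #{z ∈ Ico x N | z ∈ B ∧ (z : ZMod ℓ) = j}

theorem beadCount_insert_sdiff {B : Set ℤ} {a b : ℤ} (hb : b ∈ B) (ha : a ∉ B) (x N : ℤ)
    (j : ZMod ℓ) :
    beadCount x N j (insert a (B \ {b})) + (if b ∈ Ico x N ∧ (b : ZMod ℓ) = j then 1 else 0) =
      beadCount x N j B + (if a ∈ Ico x N ∧ (a : ZMod ℓ) = j then 1 else 0) := by
  classical
  have hunion (C : Set ℤ) (d : ℤ) (hd : d ∉ C) :
      #{z ∈ Ico x N | z ∈ C ∧ (z : ZMod ℓ) = j} +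
        (if d ∈ Ico x N ∧ (d : ZMod ℓ) = j then 1 else 0) =
      #{z ∈ Ico x N | (z ∈ C ∨ z = d) ∧ (z : ZMod ℓ) = j} := by
    rw [← card_filter_eq_and _ (fun z : ℤ => (z : ZMod ℓ) = j), ← card_union_of_disjoint]
    · congr 1; ext z; simp only [mem_union, mem_filter]; tauto
    · rw [disjoint_filter]; rintro z - ⟨hz, -⟩ ⟨rfl, -⟩; exact hd hz
  have hab : b ≠ a := fun h => ha (h ▸ hb)
  simp only [beadCount]
  rw [hunion _ _ (by simp [hab]), hunion _ _ ha]
  congr 1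
  ext z
  simp only [mem_filter, Set.mem_insert_iff, Set.mem_sdiff, Set.mem_singleton_iff]
  constructor <;> rintro ⟨hz, h, hj⟩ <;> refine ⟨hz, ?_, hj⟩ <;> grind

theorem mem_of_le_of_intCast_eq {B : Set ℤ} (hB : ∀ z ∈ B, z - ℓ ∈ B) {z w : ℤ} (hz : z ∈ B)
    (hwz : w ≤ z) (h : (w : ZMod ℓ) = z) : w ∈ B := by
  have hiter (n : ℕ) : z - n * ℓ ∈ B := by
    induction n with
    | zero => simpa using hz
    | succ n ih => simpa [add_mul, sub_add_eq_sub_sub] using hB _ ih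
  obtain ⟨t, ht⟩ := (ZMod.intCast_eq_intCast_iff_dvd_sub w z ℓ).1 h
  rcases Nat.eq_zero_or_pos ℓ with rfl | hℓ
  · rwa [show w = z by simpa [sub_eq_zero, eq_comm] using ht]
  · lift t to ℕ using by nlinarith
    convert hiter t using 1
    linarith

theorem beadCount_add_one_le_of_sub_one_mem {B : Set ℤ} {j : ZMod ℓ}
    (hB : ∀ z ∈ B, ((z - 1 : ℤ) : ZMod ℓ) = j → z - 1 ∈ B) (x N : ℤ) :
    beadCount x N (j + 1) B ≤ beadCount (x - 1) N j B := by
  classical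
  simp only [beadCount]
  refine card_le_card_of_injOn (· - 1) (fun z hz => ?_) fun z _ w _ h => sub_left_injective h
  simp only [coe_filter, mem_Ico, Set.mem_ofPred_eq] at hz ⊢
  obtain ⟨⟨hxz, hzN⟩, hzB, hzj⟩ := hz
  have hj : ((z - 1 : ℤ) : ZMod ℓ) = j := by push_cast; rw [hzj]; ring
  exact ⟨⟨by omega, by omega⟩, hB z hzB hj, hj⟩

theorem beadCount_lt_of_sub_mem {B : Set ℤ} (hB : ∀ z ∈ B, z - ℓ ∈ B) {N : ℤ}
    (hBN : ∀ z ∈ B, z < N) {b x : ℤ} (hb : b ∈ B) (hb1 : b - 1 ∉ B) (hxb : x ≤ b) {j : ZMod ℓ}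
    (hbj : (b : ZMod ℓ) = j + 1) :
    beadCount (x - 1) N j B < beadCount x N (j + 1) B := by
  classical
  simp only [beadCount]
  have hbmem : b ∈ {z ∈ Ico x N | z ∈ B ∧ (z : ZMod ℓ) = j + 1} := by
    simp [hxb, hBN b hb, hb, hbj]
  refine lt_of_le_of_lt (card_le_card_of_injOn (· + 1) (fun z hz => ?_)
    fun z _ w _ h => add_left_injective _ h) (card_erase_lt_of_mem hbmem)
  simp only [coe_filter, mem_Ico, Set.mem_ofPred_eq] at hz
  obtain ⟨⟨hxz, -⟩, hzB, hzj⟩ := hz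
  have hz1 : ((z + 1 : ℤ) : ZMod ℓ) = b := by push_cast; rw [hzj, hbj]
  have hzb : z + 1 < b := by
    by_contra! hle
    exact hb1 (mem_of_le_of_intCast_eq hB hzB (by omega) (by push_cast at hz1 ⊢; rw [← hz1]; ring))
  have hz1B : z + 1 ∈ B := mem_of_le_of_intCast_eq hB hb hzb.le hz1
  simp only [coe_erase, coe_filter, mem_Ico, Set.mem_sdiff, Set.mem_ofPred_eq,
    Set.mem_singleton_iff]
  refine ⟨⟨⟨by omega, hBN _ hz1B⟩, hz1B, by push_cast; rw [hzj]⟩, by omega⟩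

end BeadCount

namespace YoungDiagram

variable {ℓ : ℕ}

def content (c : ℕ × ℕ) : ℤ := c.2 - c.1

theorem boxRes_eq_content (ℓ : ℕ) (c : ℕ × ℕ) : boxRes ℓ c = (content c : ZMod ℓ) := by
  simp [boxRes, content]

theorem content_mem_Ico {mu : YoungDiagram} {c : ℕ × ℕ} (hc : c ∈ mu.cells) :
    content c ∈ Ico (-(mu.colLen 0 : ℤ)) (mu.rowLen 0) := by
  rw [mem_cells] at hc
  have h1 : c.1 < mu.colLen 0 := mem_iff_lt_colLen.1 (mu.up_left_mem le_rfl (Nat.zero_le _) hc)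
  have h2 : c.2 < mu.rowLen 0 := mem_iff_lt_rowLen.1 (mu.up_left_mem (Nat.zero_le _) le_rfl hc)
  simp only [content, mem_Ico]
  omega

theorem rowLen_le_rowLen {nu mu : YoungDiagram} (h : nu ≤ mu) (i : ℕ) :
    nu.rowLen i ≤ mu.rowLen i := by
  by_contra! hlt
  exact (mem_iff_lt_rowLen.1 (h (mem_iff_lt_rowLen.2 hlt))).false

def beta (lam : YoungDiagram) (i : ℕ) : ℤ := lam.rowLen i - i

def beads (lam : YoungDiagram) : Set ℤ := Set.range lam.beta

theorem beta_strictAnti (lam : YoungDiagram) : StrictAnti lam.beta :=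
  strictAnti_nat_of_succ_lt fun i => by
    have := lam.rowLen_anti i (i + 1) i.le_succ
    simp only [beta]
    omega

theorem le_rowLen_zero_of_mem_beads {lam : YoungDiagram} {z : ℤ} (hz : z ∈ lam.beads) :
    z ≤ lam.rowLen 0 := by
  obtain ⟨i, rfl⟩ := hz
  have := lam.beta_strictAnti.antitone (Nat.zero_le i)
  simp only [beta] at this ⊢
  omega

theorem isLowerSet_erase {lam : YoungDiagram} {c : ℕ × ℕ} (hr : (c.1, c.2 + 1) ∉ lam)
    (hd : (c.1 + 1, c.2) ∉ lam) : IsLowerSet (lam.cells.erase c : Set (ℕ × ℕ)) := by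
  intro q p hpq hq
  simp only [coe_erase, Set.mem_sdiff, mem_coe, mem_cells, Set.mem_singleton_iff] at hq ⊢
  refine ⟨lam.isLowerSet hpq hq.1, ?_⟩
  rintro rfl
  obtain ⟨h1, h2⟩ := hpq
  rcases (h1.lt_or_eq : p.1 < q.1 ∨ p.1 = q.1) with h1 | h1
  · exact hd (lam.up_left_mem h1 h2 hq.1)
  · have h2' : p.2 < q.2 := lt_of_le_of_ne h2 fun h => hq.2 (Prod.ext h1.symm h.symm)
    exact hr (lam.up_left_mem h1.le h2' hq.1)

section Erase

variable {lam rho : YoungDiagram} {c : ℕ × ℕ}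

theorem rowLen_of_cells_eq_erase (hc : c ∈ lam.cells) (he : rho.cells = lam.cells.erase c) :
    lam.rowLen c.1 = c.2 + 1 ∧ rho.rowLen = Function.update lam.rowLen c.1 c.2 := by
  obtain ⟨r, s⟩ := c
  have hmem (z : ℕ × ℕ) : z ∈ rho ↔ z ∈ lam ∧ z ≠ (r, s) := by
    rw [← mem_cells, he, mem_erase, mem_cells, and_comm]
  have hlen : lam.rowLen r = s + 1 := by
    have hs : (r, s + 1) ∉ lam := fun h =>
      ((hmem _).1 (rho.up_left_mem le_rfl s.le_succ ((hmem _).2 ⟨h, by simp⟩))).2 rfl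
    rw [mem_cells, mem_iff_lt_rowLen] at hc
    rw [mem_iff_lt_rowLen] at hs
    omega
  refine ⟨hlen, funext fun i => le_antisymm ?_ ?_⟩
  · by_contra! hlt
    have := (hmem _).1 (mem_iff_lt_rowLen.2 hlt)
    rcases eq_or_ne i r with rfl | hi
    · simp at this
    · rw [Function.update_of_ne hi] at this
      exact (mem_iff_lt_rowLen.1 this.1).false
  · rcases eq_or_ne i r with rfl | hi
    · rw [Function.update_self]
      by_contra! hlt
      have h1 : (i, s - 1) ∈ lam := mem_iff_lt_rowLen.2 (by omega)
      have h2 : (i, s - 1) ∈ rho := (hmem _).2 ⟨h1, by simp; omega⟩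
      rw [mem_iff_lt_rowLen] at h2
      omega
    · rw [Function.update_of_ne hi]
      by_contra! hlt
      have h1 : (i, rho.rowLen i) ∈ lam := mem_iff_lt_rowLen.2 hlt
      exact (mem_iff_lt_rowLen.1 ((hmem _).2 ⟨h1, by simp [hi]⟩)).false

theorem beta_fst_of_cells_eq_erase (hc : c ∈ lam.cells) (he : rho.cells = lam.cells.erase c) :
    lam.beta c.1 = content c + 1 := by
  simp only [beta, content, (rowLen_of_cells_eq_erase hc he).1]
  push_cast
  ring

theorem beta_of_cells_eq_erase (hc : c ∈ lam.cells) (he : rho.cells = lam.cells.erase c) :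
    rho.beta = Function.update lam.beta c.1 (content c) := by
  ext i
  rw [beta, (rowLen_of_cells_eq_erase hc he).2]
  rcases eq_or_ne i c.1 with rfl | hi
  · simp [content]
  · simp [Function.update_of_ne hi, beta]

theorem content_notMem_beads (hc : c ∈ lam.cells) (he : rho.cells = lam.cells.erase c) :
    content c ∉ lam.beads := by
  rintro ⟨i, hi⟩
  have hbeta := beta_of_cells_eq_erase hc he
  have hne : i ≠ c.1 := by
    rintro rfl
    have := beta_fst_of_cells_eq_erase hc he
    omega
  have : rho.beta i = rho.beta c.1 := by simp [hbeta, Function.update_of_ne hne, hi]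
  exact hne (rho.beta_strictAnti.injective this)

theorem beads_of_cells_eq_erase (hc : c ∈ lam.cells) (he : rho.cells = lam.cells.erase c) :
    rho.beads = insert (content c) (lam.beads \ {content c + 1}) := by
  rw [beads, beta_of_cells_eq_erase hc he, lam.beta_strictAnti.injective.range_update,
    beta_fst_of_cells_eq_erase hc he, beads]

end Erase

theorem exists_removable_of_mem_beads {lam : YoungDiagram} {b : ℤ} (hb : b ∈ lam.beads)
    (hb1 : b - 1 ∉ lam.beads) : ∃ c, Removable lam c ∧ lam.beta c.1 = b := by
  obtain ⟨i, rfl⟩ := hb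
  have hnext : lam.beta (i + 1) ≤ lam.beta i - 2 := by
    have := lam.beta_strictAnti (Nat.lt_add_one i)
    have : lam.beta (i + 1) ≠ lam.beta i - 1 := fun h => hb1 ⟨i + 1, h⟩
    omega
  have hanti := lam.rowLen_anti i (i + 1) i.le_succ
  simp only [beta] at hnext
  push_cast at hnext
  obtain ⟨s, hs⟩ : ∃ s, lam.rowLen i = s + 1 := ⟨lam.rowLen i - 1, by omega⟩
  have hr : (i, s + 1) ∉ lam := by rw [mem_iff_lt_rowLen]; omega
  have hd : (i + 1, s) ∉ lam := by rw [mem_iff_lt_rowLen]; omega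
  refine ⟨(i, s), ⟨?_, ⟨lam.cells.erase (i, s), isLowerSet_erase hr hd⟩, rfl⟩, rfl⟩
  rw [mem_cells, mem_iff_lt_rowLen]
  omega

theorem exists_cells_eq_erase_of_mem_beads {lam : YoungDiagram} {b : ℤ} (hb : b ∈ lam.beads)
    (hb1 : b - 1 ∉ lam.beads) :
    ∃ c ∈ lam.cells, ∃ rho : YoungDiagram, rho.cells = lam.cells.erase c ∧
      content c = b - 1 ∧ rho.beads = insert (b - 1) (lam.beads \ {b}) := by
  obtain ⟨c, ⟨hc, rho, he⟩, hcb⟩ := exists_removable_of_mem_beads hb hb1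
  have hcont : content c = b - 1 := by have := beta_fst_of_cells_eq_erase hc he; omega
  refine ⟨c, hc, rho, he, hcont, ?_⟩
  rw [beads_of_cells_eq_erase hc he, hcont, sub_add_cancel]

theorem beadCount_of_cells_eq_erase {lam rho : YoungDiagram} {c : ℕ × ℕ} (hc : c ∈ lam.cells)
    (he : rho.cells = lam.cells.erase c) {x N : ℤ} (hcx : content c ∈ Ico x (N - 1))
    (j : ZMod ℓ) :
    beadCount x N j rho.beads + (if boxRes ℓ c + 1 = j then 1 else 0) =
      beadCount x N j lam.beads + (if boxRes ℓ c = j then 1 else 0) := by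
  have hb : content c + 1 ∈ lam.beads := ⟨c.1, beta_fst_of_cells_eq_erase hc he⟩
  have hmove := beadCount_insert_sdiff hb (content_notMem_beads hc he) x N j
  rw [mem_Ico] at hcx
  have h1 : content c + 1 ∈ Ico x N := mem_Ico.2 ⟨by omega, by omega⟩
  have h0 : content c ∈ Ico x N := mem_Ico.2 ⟨by omega, by omega⟩
  rw [beads_of_cells_eq_erase hc he, boxRes_eq_content]
  simpa [h0, h1] using hmove

theorem _root_.Removals.cells_subset {lam rho : YoungDiagram} (h : Removals lam rho) :
    rho.cells ⊆ lam.cells := by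
  induction h with
  | refl => exact subset_rfl
  | tail _ hstep ih =>
    obtain ⟨c, -, he⟩ := hstep
    exact he ▸ (erase_subset _ _).trans ih

theorem beadCount_of_removals {lam rho : YoungDiagram} (h : Removals lam rho) {x N : ℤ}
    (hW : ∀ c ∈ lam.cells, content c ∈ Ico x (N - 1)) (j : ZMod ℓ) :
    beadCount x N j rho.beads + #{c ∈ lam.cells \ rho.cells | boxRes ℓ c + 1 = j} =
      beadCount x N j lam.beads + #{c ∈ lam.cells \ rho.cells | boxRes ℓ c = j} := by
  induction h with
  | refl => simp
  | @tail rho' rho hrem hstep ih =>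
    obtain ⟨c, hc, he⟩ := hstep
    have hstep := beadCount_of_cells_eq_erase hc he (hW c (Removals.cells_subset hrem hc)) j
    have hD : lam.cells \ rho.cells = insert c (lam.cells \ rho'.cells) := by
      rw [he, sdiff_erase (Removals.cells_subset hrem hc)]
    have hcD (p : ℕ × ℕ → Prop) [DecidablePred p] : c ∉ {d ∈ lam.cells \ rho'.cells | p d} :=
      fun h => (mem_sdiff.1 (mem_filter.1 h).1).2 hc
    rw [hD, filter_insert, filter_insert]
    split_ifs at hstep ⊢ <;> (repeat rw [card_insert_of_notMem (hcD _)]) <;> omega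

theorem beadCount_of_elemStep [NeZero ℓ] {lam rho : YoungDiagram} (h : ElemStep ℓ lam rho)
    {x N : ℤ} (hW : ∀ c ∈ lam.cells, content c ∈ Ico x (N - 1)) (j : ZMod ℓ) :
    beadCount x N j rho.beads = beadCount x N j lam.beads := by
  obtain ⟨hrem, hcard, hres⟩ := h
  have hinj : Set.InjOn (boxRes ℓ) (lam.cells \ rho.cells : Finset (ℕ × ℕ)) :=
    fun c hc c' hc' h => by_contra fun hne => hres c hc c' hc' hne h
  have hcount := beadCount_of_removals hrem hW j
  simp only [← eq_sub_iff_add_eq] at hcount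
  rw [card_filter_eq_one_of_injOn hcard hinj, card_filter_eq_one_of_injOn hcard hinj] at hcount
  omega

theorem cells_subset_of_reflTransGen_elemStep {mu nu : YoungDiagram}
    (h : Relation.ReflTransGen (ElemStep ℓ) mu nu) : nu.cells ⊆ mu.cells := by
  induction h with
  | refl => exact subset_rfl
  | tail _ hstep ih => exact (Removals.cells_subset hstep.1).trans ih

theorem beadCount_of_reflTransGen_elemStep [NeZero ℓ] {mu nu : YoungDiagram}
    (h : Relation.ReflTransGen (ElemStep ℓ) mu nu) {x N : ℤ}
    (hW : ∀ c ∈ mu.cells, content c ∈ Ico x (N - 1)) (j : ZMod ℓ) :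
    beadCount x N j nu.beads = beadCount x N j mu.beads := by
  induction h with
  | refl => rfl
  | tail hchain hstep ih =>
    rw [beadCount_of_elemStep hstep
      (fun c hc => hW c (cells_subset_of_reflTransGen_elemStep hchain hc)), ih]

theorem card_image_content_insert {D : Finset (ℕ × ℕ)} {c : ℕ × ℕ} {b : ℤ} {n : ℕ}
    (hc : c ∉ D) (hcb : content c = b - 1) (hcard : #D = n)
    (hD : D.image content = Ico (b - 1 - n) (b - 1)) :
    #(insert c D) = n + 1 ∧ (insert c D).image content = Ico (b - (n + 1 : ℕ)) b := by
  refine ⟨by rw [card_insert_of_notMem hc, hcard], ?_⟩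
  rw [image_insert, hD, hcb]
  ext z
  simp only [mem_insert, mem_Ico]
  omega

-- Stated with `lam.beads \ {b}` so that the case `n = 0` holds, with `rho = lam`.
theorem exists_removals_beads_eq (lam : YoungDiagram) (b : ℤ) (n : ℕ) (hb : b ∈ lam.beads)
    (hbn : b - n ∉ lam.beads \ {b}) :
    ∃ rho, Removals lam rho ∧ rho.beads = insert (b - n) (lam.beads \ {b}) ∧
      #(lam.cells \ rho.cells) = n ∧ (lam.cells \ rho.cells).image content = Ico (b - n) b := by
  induction n generalizing lam b with
  | zero => exact ⟨lam, .refl, by simp [Set.insert_eq_of_mem hb], by simp, by simp⟩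
  | succ n ih =>
    have hbn' : b - (n + 1 : ℕ) ∉ lam.beads :=
      fun h => hbn ⟨h, by rw [Set.mem_singleton_iff]; omega⟩
    have hshift : b - 1 - n = b - (n + 1 : ℕ) := by push_cast; ring
    by_cases h1 : b - 1 ∈ lam.beads
    · -- first slide the bead at `b - 1` down to `b - (n + 1)`, then the bead at `b` to `b - 1`
      obtain ⟨rho', hrem', hbeads', hcard', himg'⟩ :=
        ih lam (b - 1) h1 fun h => hbn' (hshift ▸ h.1)
      have hn : n ≠ 0 := by rintro rfl; exact hbn' (by simpa using h1)
      have hb' : b ∈ rho'.beads := by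
        rw [hbeads']
        exact Set.mem_insert_of_mem _ ⟨hb, by rw [Set.mem_singleton_iff]; omega⟩
      have hb1' : b - 1 ∉ rho'.beads := by
        rw [hbeads']
        rintro (h | ⟨-, h⟩)
        · omega
        · exact h rfl
      obtain ⟨c, hc, rho, he, hcont, hbeads⟩ := exists_cells_eq_erase_of_mem_beads hb' hb1'
      have hD : lam.cells \ rho.cells = insert c (lam.cells \ rho'.cells) := by
        rw [he, sdiff_erase (Removals.cells_subset hrem' hc)]
      refine ⟨rho, hrem'.tail ⟨c, hc, he⟩, ?_, hD ▸ card_image_content_insert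
        (fun h => (mem_sdiff.1 h).2 hc) hcont hcard' himg'⟩
      rw [hbeads, hbeads']
      ext z
      simp only [Set.mem_insert_iff, Set.mem_sdiff, Set.mem_singleton_iff]
      push_cast
      grind
    · -- first slide the bead at `b` to `b - 1`, then on down to `b - (n + 1)`
      obtain ⟨c, hc, rho1, he, hcont, hbeads1⟩ := exists_cells_eq_erase_of_mem_beads hb h1
      obtain ⟨rho, hrem, hbeads, hcard, himg⟩ := ih rho1 (b - 1) (by simp [hbeads1])
        fun ⟨h, hne⟩ => by
          rcases hbeads1 ▸ h with h | ⟨h, -⟩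
          · exact hne h
          · exact hbn' (hshift ▸ h)
      have hcrho : c ∉ rho.cells := fun h => by simpa [he] using Removals.cells_subset hrem h
      have hD : lam.cells \ rho.cells = insert c (rho1.cells \ rho.cells) := by
        rw [← insert_sdiff_of_notMem _ hcrho, he, insert_erase hc]
      refine ⟨rho, (Relation.ReflTransGen.single ⟨c, hc, he⟩).trans hrem, ?_,
        hD ▸ card_image_content_insert (by simp [he]) hcont hcard himg⟩
      rw [hbeads, hbeads1]
      ext z
      simp only [Set.mem_insert_iff, Set.mem_sdiff, Set.mem_singleton_iff]
      push_cast
      grind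

theorem sub_one_mem_beads_of_isJCore {J : Set (ZMod ℓ)} {mu : YoungDiagram}
    (hmu : IsJCore ℓ J mu) {z : ℤ} (hz : z ∈ mu.beads) (hJ : ((z - 1 : ℤ) : ZMod ℓ) ∈ J) :
    z - 1 ∈ mu.beads := by
  by_contra h
  obtain ⟨c, hc, rho, he, hcont, -⟩ := exists_cells_eq_erase_of_mem_beads hz h
  exact hmu ⟨c, ⟨hc, rho, he⟩, by rwa [boxRes_eq_content, hcont]⟩

theorem sub_mem_beads_of_isLCore {nu : YoungDiagram} (hnu : IsLCore ℓ nu) {z : ℤ}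
    (hz : z ∈ nu.beads) : z - ℓ ∈ nu.beads := by
  by_contra h
  obtain ⟨rho, hrem, -, hcard, himg⟩ := exists_removals_beads_eq nu z ℓ hz fun h' => h h'.1
  have hinj : Set.InjOn content (nu.cells \ rho.cells : Finset (ℕ × ℕ)) :=
    card_image_iff.1 (by rw [himg, Int.card_Ico, hcard]; simp)
  refine hnu ⟨rho, hrem, hcard, fun c hc c' hc' hne hres => hne (hinj hc hc' ?_)⟩
  have hc1 := mem_Ico.1 (himg ▸ mem_image_of_mem content hc)
  have hc2 := mem_Ico.1 (himg ▸ mem_image_of_mem content hc')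
  rw [boxRes_eq_content, boxRes_eq_content, ZMod.intCast_eq_intCast_iff_dvd_sub] at hres
  have := Int.eq_zero_of_abs_lt_dvd hres (by rw [abs_lt]; omega)
  omega

end YoungDiagram

open YoungDiagram

/-- Let `J ⊆ ℤ/ℓℤ`, let `μ` be a `J`-core, and let `ν` be an `ℓ`-core of `μ`, i.e., an
`ℓ`-core obtained from `μ` by a sequence of elementary `ℓ`-steps.  Then `ν` is a `J`-core. -/
theorem isJCore_of_lcore_of_jcore (ℓ : ℕ) (hℓ : 0 < ℓ) (J : Set (ZMod ℓ))
    (mu nu : YoungDiagram) (hmu : IsJCore ℓ J mu)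
    (hsteps : Relation.ReflTransGen (ElemStep ℓ) mu nu)
    (hnu : IsLCore ℓ nu) :
    IsJCore ℓ J nu := by
  have : NeZero ℓ := ⟨hℓ.ne'⟩
  rintro ⟨c, ⟨hc, rho, he⟩, hcJ⟩
  have hsub := cells_subset_of_reflTransGen_elemStep hsteps
  set x : ℤ := -(mu.colLen 0)
  set N : ℤ := mu.rowLen 0 + 1
  have hW : ∀ c ∈ mu.cells, content c ∈ Ico x (N - 1) := fun c hc => by
    simpa [N] using content_mem_Ico hc
  have hW' : ∀ c ∈ mu.cells, content c ∈ Ico (x - 1) (N - 1) :=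
    fun c hc => Ico_subset_Ico (by omega) le_rfl (hW c hc)
  have hb : content c + 1 ∈ nu.beads := ⟨c.1, beta_fst_of_cells_eq_erase hc he⟩
  have hμ := beadCount_add_one_le_of_sub_one_mem
    (fun z hz hzj => sub_one_mem_beads_of_isJCore hmu hz (hzj ▸ hcJ)) x N
  have hνN : ∀ z ∈ nu.beads, z < N := fun z hz => by
    have := rowLen_le_rowLen (cells_subset_iff.1 hsub) 0
    have := le_rowLen_zero_of_mem_beads hz
    omega
  have hxb : x ≤ content c + 1 := by have := mem_Ico.1 (hW c (hsub hc)); omega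
  have hν := beadCount_lt_of_sub_mem (fun z hz => sub_mem_beads_of_isLCore hnu hz) hνN hb
    (by simpa using content_notMem_beads hc he) hxb (j := boxRes ℓ c)
    (by rw [boxRes_eq_content]; push_cast; rfl)
  rw [beadCount_of_reflTransGen_elemStep hsteps hW,
    beadCount_of_reflTransGen_elemStep hsteps hW'] at hν
  omega
end
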